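/- arXiv:1705.09249 — 3 statements merged into one kernel-verified Lean document; each statement's English description precedes it below -/
import Mathlib

section
/- Let X ∈ ℝ^{n×p} and D ∈ ℝ^{m×p} be real matrices with ker(X) ∩ ker(D) = {0}, and for ν > 0 set A(ν) = (ν/n)·XᵀX + DᵀD (a symmetric positive definite matrix). Let S ⊆ {1,…,m} with s = |S| < m and let D_{S^c} ∈ ℝ^{(m−s)×p} be the submatrix of D consisting of the rows indexed by the complement of S. Define θ(ν) = arccos √( trace(D_{S^c} A(ν)⁻¹ D_{S^c}ᵀ) / (m−s) ). Then lim_{ν→+∞} θ(ν) = π/2 if and only if the column space of D_{S^c}ᵀ is contained in the column space of Xᵀ. -/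
/-!
For a vector `r` put `q_r(ν) = rᵀ A(ν)⁻¹ r`; the trace is `∑ q_{d_i}` over the rows `d_i` of
`D_{Sᶜ}`, and as the `q_{d_i}` are nonnegative and `cos (arccos √x) = √x` near `θ = π/2`,
`θ → π/2` iff every `q_{d_i}(ν) → 0`. With `y = A(ν)⁻¹ r` one has `q_r = yᵀ A(ν) y = (ν/n)‖Xy‖² + ‖Dy‖²`.
If `r = Xᵀ w`, then `q_r = ⟨w, Xy⟩ ≤ ‖w‖ ‖Xy‖` forces `q_r ≤ (n/ν)‖w‖² → 0`. Otherwise, as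
`Im Xᵀ = (ker X)ᗮ`, some `u ∈ ker X` has `⟨u, r⟩ ≠ 0`; then `⟨u, r⟩ = ⟨Du, Dy⟩`, so
`⟨u, r⟩² ≤ ‖Du‖² q_r` keeps `q_r` away from `0` uniformly in `ν`.
-/

open Matrix Real Filter Topology

namespace Matrix

theorem range_mulVecLin_transpose_le_iff {κ α R : Type*} [Fintype κ] [CommSemiring R]
    (M : Matrix κ α R) (p : Submodule R (α → R)) :
    LinearMap.range Mᵀ.mulVecLin ≤ p ↔ ∀ i, M i ∈ p := by
  rw [range_mulVecLin, Submodule.span_le, Set.range_subset_iff]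
  rfl

variable {ι κ α : Type*} [Fintype ι] [Fintype κ] [Fintype α]

theorem dotProduct_self_nonneg (v : α → ℝ) : 0 ≤ v ⬝ᵥ v := dotProduct_star_self_nonneg v

theorem sq_dotProduct_le (v w : α → ℝ) : (v ⬝ᵥ w) ^ 2 ≤ (v ⬝ᵥ v) * (w ⬝ᵥ w) := by
  simpa only [dotProduct, sq] using Finset.sum_mul_sq_le_sq_mul_sq Finset.univ v w

theorem trace_mul_mul_transpose {R : Type*} [CommSemiring R] (M : Matrix κ α R)
    (B : Matrix α α R) : (M * B * Mᵀ).trace = ∑ i, M i ⬝ᵥ B *ᵥ M i := by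
  simp only [trace, diag, mul_apply, transpose_apply, mulVec, dotProduct, Finset.sum_mul,
    Finset.mul_sum]
  exact Finset.sum_congr rfl fun i _ => Finset.sum_comm.trans
    (Finset.sum_congr rfl fun _ _ => Finset.sum_congr rfl fun _ _ => by ring)

theorem exists_mulVec_eq_zero_dotProduct_ne_zero [DecidableEq α] {X : Matrix ι α ℝ}
    {r : α → ℝ} (hr : r ∉ LinearMap.range Xᵀ.mulVecLin) :
    ∃ u, X *ᵥ u = 0 ∧ u ⬝ᵥ r ≠ 0 := by
  obtain ⟨f, hfr, hf⟩ := Submodule.exists_dual_map_eq_bot_of_notMem hr inferInstance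
  set u := (dotProductEquiv ℝ α).symm f
  have hfu : ∀ x, f x = u ⬝ᵥ x := fun x => by
    rw [← dotProductEquiv_apply_apply, LinearEquiv.apply_symm_apply]
  refine ⟨u, ?_, hfu r ▸ hfr⟩
  have hvanish : u ⬝ᵥ Xᵀ *ᵥ (X *ᵥ u) = 0 := by
    rw [← hfu, ← Submodule.mem_bot ℝ, ← hf]
    exact Submodule.mem_map_of_mem ⟨X *ᵥ u, rfl⟩
  rwa [dotProduct_mulVec, vecMul_transpose, dotProduct_self_eq_zero] at hvanish

def splitGram (X : Matrix ι α ℝ) (D : Matrix κ α ℝ) (c : ℝ) : Matrix α α ℝ :=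
  c • (Xᵀ * X) + Dᵀ * D

variable (X : Matrix ι α ℝ) (D : Matrix κ α ℝ)

theorem dotProduct_splitGram_mulVec (c : ℝ) (x y : α → ℝ) :
    x ⬝ᵥ splitGram X D c *ᵥ y = c * (X *ᵥ x ⬝ᵥ X *ᵥ y) + D *ᵥ x ⬝ᵥ D *ᵥ y := by
  rw [splitGram, add_mulVec, dotProduct_add, smul_mulVec, dotProduct_smul, smul_eq_mul,
    ← mulVec_mulVec, ← mulVec_mulVec, dotProduct_mulVec, vecMul_transpose,
    dotProduct_mulVec x Dᵀ, vecMul_transpose]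

variable {c : ℝ}

theorem splitGram_posDef (hker : LinearMap.ker X.mulVecLin ⊓ LinearMap.ker D.mulVecLin = ⊥)
    (hc : 0 < c) : (splitGram X D c).PosDef := by
  have hpsd : (splitGram X D c).PosSemidef :=
    ((posSemidef_conjTranspose_mul_self X).smul hc.le).add (posSemidef_conjTranspose_mul_self D)
  refine PosDef.of_dotProduct_mulVec_pos hpsd.isHermitian fun x hx => ?_
  have hXD : x ∉ LinearMap.ker X.mulVecLin ⊓ LinearMap.ker D.mulVecLin := by
    rwa [hker, Submodule.mem_bot]
  simp only [Submodule.mem_inf, LinearMap.mem_ker, mulVecLin_apply, not_and_or,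
    ← dotProduct_self_eq_zero] at hXD
  have hXx := dotProduct_self_nonneg (X *ᵥ x)
  have hDx := dotProduct_self_nonneg (D *ᵥ x)
  rw [star_trivial, dotProduct_splitGram_mulVec]
  rcases hXD with h | h
  · exact add_pos_of_pos_of_nonneg (mul_pos hc (hXx.lt_of_ne' h)) hDx
  · exact add_pos_of_nonneg_of_pos (mul_nonneg hc.le hXx) (hDx.lt_of_ne' h)

variable {X D} {r y : α → ℝ}

theorem dotProduct_eq_of_splitGram_mulVec_eq (hy : splitGram X D c *ᵥ y = r) :
    r ⬝ᵥ y = c * (X *ᵥ y ⬝ᵥ X *ᵥ y) + D *ᵥ y ⬝ᵥ D *ᵥ y := by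
  rw [← hy, dotProduct_comm, dotProduct_splitGram_mulVec]

theorem dotProduct_nonneg_of_splitGram_mulVec_eq (hc : 0 ≤ c) (hy : splitGram X D c *ᵥ y = r) :
    0 ≤ r ⬝ᵥ y := by
  rw [dotProduct_eq_of_splitGram_mulVec_eq hy]
  have := dotProduct_self_nonneg (X *ᵥ y)
  have := dotProduct_self_nonneg (D *ᵥ y)
  positivity

theorem mul_dotProduct_le_of_splitGram_mulVec_eq (hc : 0 ≤ c) {w : ι → ℝ}
    (hy : splitGram X D c *ᵥ y = Xᵀ *ᵥ w) : c * (Xᵀ *ᵥ w ⬝ᵥ y) ≤ w ⬝ᵥ w := by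
  have hq := dotProduct_eq_of_splitGram_mulVec_eq hy
  have hqw : Xᵀ *ᵥ w ⬝ᵥ y = w ⬝ᵥ X *ᵥ y := by
    rw [dotProduct_comm, dotProduct_mulVec, vecMul_transpose, dotProduct_comm]
  have hDy := dotProduct_self_nonneg (D *ᵥ y)
  rcases (dotProduct_nonneg_of_splitGram_mulVec_eq hc hy).eq_or_lt with hq0 | hq0
  · rw [← hq0, mul_zero]
    exact dotProduct_self_nonneg w
  refine le_of_mul_le_mul_left ?_ hq0
  calc (Xᵀ *ᵥ w ⬝ᵥ y) * (c * (Xᵀ *ᵥ w ⬝ᵥ y)) = c * (w ⬝ᵥ X *ᵥ y) ^ 2 := by rw [hqw]; ring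
    _ ≤ c * ((w ⬝ᵥ w) * (X *ᵥ y ⬝ᵥ X *ᵥ y)) :=
      mul_le_mul_of_nonneg_left (sq_dotProduct_le w (X *ᵥ y)) hc
    _ = (w ⬝ᵥ w) * (c * (X *ᵥ y ⬝ᵥ X *ᵥ y)) := by ring
    _ ≤ (w ⬝ᵥ w) * (Xᵀ *ᵥ w ⬝ᵥ y) :=
      mul_le_mul_of_nonneg_left (by linarith) (dotProduct_self_nonneg w)
    _ = (Xᵀ *ᵥ w ⬝ᵥ y) * (w ⬝ᵥ w) := mul_comm _ _

theorem sq_dotProduct_le_of_splitGram_mulVec_eq (hc : 0 ≤ c) {u : α → ℝ} (hu : X *ᵥ u = 0)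
    (hy : splitGram X D c *ᵥ y = r) : (u ⬝ᵥ r) ^ 2 ≤ (D *ᵥ u ⬝ᵥ D *ᵥ u) * (r ⬝ᵥ y) := by
  have hur : u ⬝ᵥ r = D *ᵥ u ⬝ᵥ D *ᵥ y := by
    rw [← hy, dotProduct_splitGram_mulVec, hu, zero_dotProduct, mul_zero, zero_add]
  have hq := dotProduct_eq_of_splitGram_mulVec_eq hy
  calc (u ⬝ᵥ r) ^ 2 ≤ (D *ᵥ u ⬝ᵥ D *ᵥ u) * (D *ᵥ y ⬝ᵥ D *ᵥ y) :=
      hur ▸ sq_dotProduct_le (D *ᵥ u) (D *ᵥ y)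
    _ ≤ (D *ᵥ u ⬝ᵥ D *ᵥ u) * (r ⬝ᵥ y) :=
      mul_le_mul_of_nonneg_left
        (hq ▸ le_add_of_nonneg_left (mul_nonneg hc (dotProduct_self_nonneg _)))
        (dotProduct_self_nonneg _)

variable (X D) [DecidableEq α]

theorem splitGram_mulVec_inv_mulVec
    (hker : LinearMap.ker X.mulVecLin ⊓ LinearMap.ker D.mulVecLin = ⊥) (hc : 0 < c)
    (r : α → ℝ) : splitGram X D c *ᵥ ((splitGram X D c)⁻¹ *ᵥ r) = r := by
  rw [mulVec_mulVec, mul_nonsing_inv _ (splitGram_posDef X D hker hc).det_pos.ne'.isUnit,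
    one_mulVec]

theorem tendsto_dotProduct_splitGram_inv_mulVec_iff
    (hker : LinearMap.ker X.mulVecLin ⊓ LinearMap.ker D.mulVecLin = ⊥)
    {β : Type*} {l : Filter β} [l.NeBot] {c : β → ℝ} (hc : Tendsto c l atTop) (r : α → ℝ) :
    Tendsto (fun b => r ⬝ᵥ (splitGram X D (c b))⁻¹ *ᵥ r) l (𝓝 0) ↔
      r ∈ LinearMap.range Xᵀ.mulVecLin := by
  have hinv : ∀ᶠ b in l, 0 < c b ∧
      splitGram X D (c b) *ᵥ ((splitGram X D (c b))⁻¹ *ᵥ r) = r :=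
    (hc.eventually_gt_atTop 0).mono fun b hb => ⟨hb, splitGram_mulVec_inv_mulVec X D hker hb r⟩
  constructor
  · intro hlim
    by_contra hr
    obtain ⟨u, hXu, hur⟩ := exists_mulVec_eq_zero_dotProduct_ne_zero hr
    have hDu : 0 < D *ᵥ u ⬝ᵥ D *ᵥ u := by
      refine (dotProduct_self_nonneg _).lt_of_ne' fun hDu => ?_
      have hu : u ∈ LinearMap.ker X.mulVecLin ⊓ LinearMap.ker D.mulVecLin :=
        ⟨hXu, dotProduct_self_eq_zero.1 hDu⟩
      rw [hker, Submodule.mem_bot] at hu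
      exact hur (by rw [hu, zero_dotProduct])
    have hlow : ∀ᶠ b in l, (u ⬝ᵥ r) ^ 2 / (D *ᵥ u ⬝ᵥ D *ᵥ u) ≤
        r ⬝ᵥ (splitGram X D (c b))⁻¹ *ᵥ r := hinv.mono fun b hb =>
      (div_le_iff₀' hDu).2 (sq_dotProduct_le_of_splitGram_mulVec_eq hb.1.le hXu hb.2)
    exact (div_pos (pow_two_pos_of_ne_zero hur) hDu).not_ge (ge_of_tendsto hlim hlow)
  · rintro ⟨w, rfl⟩
    refine tendsto_of_tendsto_of_tendsto_of_le_of_le' tendsto_const_nhds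
      ((tendsto_const_nhds (x := w ⬝ᵥ w)).div_atTop hc) (hinv.mono fun b hb => ?_)
      (hinv.mono fun b hb => ?_)
    · exact dotProduct_nonneg_of_splitGram_mulVec_eq hb.1.le hb.2
    · exact (le_div_iff₀' hb.1).2 (mul_dotProduct_le_of_splitGram_mulVec_eq hb.1.le hb.2)

end Matrix

section Limits

variable {β : Type*} {l : Filter β}

theorem tendsto_div_const_nhds_zero_iff {f : β → ℝ} {k : ℝ} (hk : k ≠ 0) :
    Tendsto (fun b => f b / k) l (𝓝 0) ↔ Tendsto f l (𝓝 0) :=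
  ⟨fun h => by simpa [hk] using h.mul_const k, fun h => by simpa using h.div_const k⟩

theorem tendsto_sum_nhds_zero_iff_of_nonneg {ι : Type*} [Fintype ι] {f : ι → β → ℝ}
    (hf : ∀ i, ∀ᶠ b in l, 0 ≤ f i b) :
    Tendsto (fun b => ∑ i, f i b) l (𝓝 0) ↔ ∀ i, Tendsto (f i) l (𝓝 0) := by
  refine ⟨fun h i => ?_, fun h => by simpa using tendsto_finsetSum Finset.univ fun i _ => h i⟩
  refine tendsto_of_tendsto_of_tendsto_of_le_of_le' tendsto_const_nhds h (hf i) ?_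
  exact (eventually_all.2 hf).mono fun b hb =>
    Finset.single_le_sum (fun j _ => hb j) (Finset.mem_univ i)

theorem tendsto_arccos_sqrt_nhds_pi_div_two_iff {f : β → ℝ} (hf : ∀ᶠ b in l, 0 ≤ f b) :
    Tendsto (fun b => arccos √(f b)) l (𝓝 (π / 2)) ↔ Tendsto f l (𝓝 0) := by
  refine ⟨fun h => ?_, fun h => by
    simpa [Function.comp_def] using ((continuous_arccos.comp continuous_sqrt).tendsto 0).comp h⟩
  have hlt : ∀ᶠ b in l, √(f b) < 1 :=
    (h.eventually (eventually_gt_nhds (by positivity))).mono fun b hb => arccos_pos.1 hb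
  have hsqrt : Tendsto (fun b => √(f b)) l (𝓝 0) := by
    have hcos := (continuous_cos.tendsto _).comp h
    rw [cos_pi_div_two] at hcos
    exact hcos.congr' <| hlt.mono fun b hb =>
      cos_arccos ((neg_one_lt_zero.trans_le (sqrt_nonneg _)).le) hb.le
  simpa using (hsqrt.pow 2).congr' (hf.mono fun b hb => sq_sqrt hb)

end Limits

theorem gsplit_lbi_angle_limit_iff_general {n p m : ℕ}
    (X : Matrix (Fin n) (Fin p) ℝ) (D : Matrix (Fin m) (Fin p) ℝ)
    (hker : LinearMap.ker X.mulVecLin ⊓ LinearMap.ker D.mulVecLin = ⊥)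
    (S : Finset (Fin m)) (hS : S.card < m)
    (A : ℝ → Matrix (Fin p) (Fin p) ℝ)
    (hA : ∀ ν : ℝ, A ν = (ν / n) • (Xᵀ * X) + Dᵀ * D)
    (Dsc : Matrix {i : Fin m // i ∉ S} (Fin p) ℝ)
    (θ : ℝ → ℝ)
    (hθ : ∀ ν : ℝ, θ ν = Real.arccos (Real.sqrt
      ((Dsc * (A ν)⁻¹ * Dscᵀ).trace / ((m : ℝ) - S.card)))) :
    Tendsto θ atTop (nhds (Real.pi / 2)) ↔
      LinearMap.range (Dscᵀ).mulVecLin ≤ LinearMap.range (Xᵀ).mulVecLin := by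
  -- for `n = 0` the junk value `ν / 0 = 0` is harmless because then `Xᵀ * X = 0`
  obtain ⟨c, hc, hAc⟩ : ∃ c : ℝ → ℝ, Tendsto c atTop atTop ∧ ∀ ν, A ν = splitGram X D (c ν) := by
    rcases n.eq_zero_or_pos with rfl | hn
    · exact ⟨id, tendsto_id, fun ν => by simp [hA, splitGram, Subsingleton.elim X 0]⟩
    · exact ⟨(· / n), tendsto_id.atTop_div_const (by positivity), hA⟩
  have hms : 0 < (m : ℝ) - S.card := sub_pos.2 (by exact_mod_cast hS)
  have hnonneg : ∀ i, ∀ᶠ ν in atTop, 0 ≤ Dsc i ⬝ᵥ (A ν)⁻¹ *ᵥ Dsc i := fun i =>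
    (hc.eventually_gt_atTop 0).mono fun ν hν => by
      rw [hAc]
      exact dotProduct_nonneg_of_splitGram_mulVec_eq hν.le
        (splitGram_mulVec_inv_mulVec X D hker hν _)
  simp only [funext hθ, trace_mul_mul_transpose]
  rw [tendsto_arccos_sqrt_nhds_pi_div_two_iff, tendsto_div_const_nhds_zero_iff hms.ne',
    tendsto_sum_nhds_zero_iff_of_nonneg hnonneg, range_mulVecLin_transpose_le_iff]
  · simp only [hAc]
    exact forall_congr' fun i => tendsto_dotProduct_splitGram_inv_mulVec_iff X D hker hc (Dsc i)
  · exact (eventually_all.2 hnonneg).mono fun ν hν =>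
      div_nonneg (Finset.sum_nonneg fun i _ => hν i) hms.le

/-- **Theorem 1 (linear model) of GSplit LBI.**
For `A(ν) = (ν/n)·XᵀX + DᵀD` (positive definite since `ker X ∩ ker D = {0}`) and
`θ(ν) = arccos √(trace(D_{Sᶜ} A(ν)⁻¹ D_{Sᶜ}ᵀ)/(m−s))`, one has
`lim_{ν→∞} θ(ν) = π/2` iff `Im(D_{Sᶜ}ᵀ) ⊆ Im(Xᵀ)`. -/
theorem gsplit_lbi_angle_limit_iff {n p m : ℕ}
    (X : Matrix (Fin n) (Fin p) ℝ) (D : Matrix (Fin m) (Fin p) ℝ)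
    (hker : LinearMap.ker X.mulVecLin ⊓ LinearMap.ker D.mulVecLin = ⊥)
    (S : Finset (Fin m)) (hS : S.card < m)
    (A : ℝ → Matrix (Fin p) (Fin p) ℝ)
    (hA : ∀ ν : ℝ, A ν = (ν / n) • (Xᵀ * X) + Dᵀ * D)
    (Dsc : Matrix {i : Fin m // i ∉ S} (Fin p) ℝ)
    (hDsc : Dsc = D.submatrix (fun i : {i : Fin m // i ∉ S} => (i : Fin m)) id)
    (θ : ℝ → ℝ)
    (hθ : ∀ ν : ℝ, θ ν = Real.arccos (Real.sqrt
      ((Dsc * (A ν)⁻¹ * Dscᵀ).trace / ((m : ℝ) - S.card)))) :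
    Tendsto θ atTop (nhds (Real.pi / 2)) ↔
      LinearMap.range (Dscᵀ).mulVecLin ≤ LinearMap.range (Xᵀ).mulVecLin :=
  gsplit_lbi_angle_limit_iff_general X D hker S hS A hA Dsc θ hθ
end

section
/- Let X ∈ ℝ^{n×p} and D ∈ ℝ^{m×p} be real matrices with ker(X) ∩ ker(D) = {0}, and for ν > 0 set A(ν) = (ν/n)·XᵀX + DᵀD. If d ∈ ℝ^p lies in the column space of Xᵀ, then dᵀ A(ν)⁻¹ d → 0 as ν → +∞. -/
/-!
Write `d = Xᵀu`, `c = ν/n` and `w = A(ν)⁻¹d`. Then `q = dᵀw = wᵀA(ν)w ≥ c‖Xw‖²`, while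
`q = uᵀ(Xw) ≤ ‖u‖²/(2c) + (c/2)‖Xw‖²`; together `0 ≤ q ≤ ‖u‖²/c = n‖u‖²/ν → 0`.
-/

open Matrix Filter

namespace Matrix

variable {ι κ κ' : Type*} [Fintype ι] [Fintype κ] [Fintype κ']

lemma dotProduct_transpose_mul_self_mulVec (M : Matrix κ ι ℝ) (x y : ι → ℝ) :
    x ⬝ᵥ ((Mᵀ * M) *ᵥ y) = (M *ᵥ x) ⬝ᵥ (M *ᵥ y) := by
  rw [← mulVec_mulVec, dotProduct_mulVec, vecMul_transpose]

lemma two_mul_dotProduct_le (u v : κ → ℝ) {c : ℝ} (hc : 0 < c) :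
    2 * (u ⬝ᵥ v) ≤ (u ⬝ᵥ u) / c + c * (v ⬝ᵥ v) := by
  have h := dotProduct_self_star_nonneg (u - c • v)
  simp only [star_trivial, sub_dotProduct, dotProduct_sub, smul_dotProduct, dotProduct_smul,
    smul_eq_mul, dotProduct_comm v u] at h
  rw [div_add' _ _ _ hc.ne', le_div_iff₀ hc]
  nlinarith

lemma posDef_smul_transpose_mul_self_add {c : ℝ} (hc : 0 < c) (X : Matrix κ ι ℝ)
    (D : Matrix κ' ι ℝ) (hker : LinearMap.ker X.mulVecLin ⊓ LinearMap.ker D.mulVecLin = ⊥) :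
    (c • (Xᵀ * X) + Dᵀ * D).PosDef := by
  have hpsd : (c • (Xᵀ * X) + Dᵀ * D).PosSemidef := by
    simpa using ((posSemidef_conjTranspose_mul_self X).smul hc.le).add
      (posSemidef_conjTranspose_mul_self D)
  refine PosDef.of_dotProduct_mulVec_pos hpsd.isHermitian fun x hx => ?_
  have hXD : X *ᵥ x ≠ 0 ∨ D *ᵥ x ≠ 0 := by
    by_contra! h
    have hx' : x ∈ LinearMap.ker X.mulVecLin ⊓ LinearMap.ker D.mulVecLin := ⟨h.1, h.2⟩
    exact hx (by simpa [hker] using hx')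
  simp only [star_trivial, add_mulVec, smul_mulVec, dotProduct_add, dotProduct_smul,
    smul_eq_mul, dotProduct_transpose_mul_self_mulVec]
  have hX := dotProduct_self_star_nonneg (X *ᵥ x)
  have hD := dotProduct_self_star_nonneg (D *ᵥ x)
  simp only [star_trivial] at hX hD
  rcases hXD with h | h
  · have hX' : 0 < (X *ᵥ x) ⬝ᵥ (X *ᵥ x) := by simpa using dotProduct_self_star_pos_iff.mpr h
    exact add_pos_of_pos_of_nonneg (mul_pos hc hX') hD
  · have hD' : 0 < (D *ᵥ x) ⬝ᵥ (D *ᵥ x) := by simpa using dotProduct_self_star_pos_iff.mpr h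
    exact add_pos_of_nonneg_of_pos (mul_nonneg hc.le hX) hD'

variable [DecidableEq ι]

lemma dotProduct_inv_mulVec_le {A : Matrix ι ι ℝ} (hA : A.PosDef) (X : Matrix κ ι ℝ) {c : ℝ}
    (hc : 0 < c) (hAX : (A - c • (Xᵀ * X)).PosSemidef) (u : κ → ℝ) :
    (Xᵀ *ᵥ u) ⬝ᵥ (A⁻¹ *ᵥ (Xᵀ *ᵥ u)) ≤ (u ⬝ᵥ u) / c := by
  set w := A⁻¹ *ᵥ (Xᵀ *ᵥ u)
  have hAw : A *ᵥ w = Xᵀ *ᵥ u := by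
    rw [mulVec_mulVec, mul_nonsing_inv _ ((isUnit_iff_isUnit_det A).mp hA.isUnit), one_mulVec]
  have hq : (Xᵀ *ᵥ u) ⬝ᵥ w = u ⬝ᵥ (X *ᵥ w) := by
    rw [dotProduct_comm, dotProduct_mulVec, vecMul_transpose, dotProduct_comm]
  have hlow : c * ((X *ᵥ w) ⬝ᵥ (X *ᵥ w)) ≤ (Xᵀ *ᵥ u) ⬝ᵥ w := by
    have h := hAX.dotProduct_mulVec_nonneg w
    simp only [star_trivial, sub_mulVec, smul_mulVec, dotProduct_sub, dotProduct_smul,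
      smul_eq_mul, dotProduct_transpose_mul_self_mulVec, hAw] at h
    rw [dotProduct_comm] at h
    linarith
  have := two_mul_dotProduct_le u (X *ᵥ w) hc
  linarith

end Matrix

/-- **Forward direction of Theorem 1 (eq. (7)).** If `d ∈ Im(Xᵀ)`, then the quadratic
form `dᵀ A(ν)⁻¹ d` with `A(ν) = (ν/n)·XᵀX + DᵀD` tends to `0` as `ν → +∞`. -/
theorem quadform_tendsto_zero_of_mem_rowspace {n p m : ℕ}
    (X : Matrix (Fin n) (Fin p) ℝ) (D : Matrix (Fin m) (Fin p) ℝ)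
    (hker : LinearMap.ker X.mulVecLin ⊓ LinearMap.ker D.mulVecLin = ⊥)
    (A : ℝ → Matrix (Fin p) (Fin p) ℝ)
    (hA : ∀ ν : ℝ, A ν = (ν / n) • (Xᵀ * X) + Dᵀ * D)
    (d : Fin p → ℝ) (hd : d ∈ LinearMap.range (Xᵀ).mulVecLin) :
    Tendsto (fun ν : ℝ => d ⬝ᵥ ((A ν)⁻¹ *ᵥ d)) atTop (nhds 0) := by
  obtain ⟨u, rfl⟩ := hd
  rcases n.eq_zero_or_pos with rfl | hn
  · simp [Subsingleton.elim u 0]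
  have hn' : (0 : ℝ) < n := Nat.cast_pos.mpr hn
  have hbounds : ∀ᶠ ν in atTop, 0 ≤ (Xᵀ *ᵥ u) ⬝ᵥ ((A ν)⁻¹ *ᵥ (Xᵀ *ᵥ u)) ∧
      (Xᵀ *ᵥ u) ⬝ᵥ ((A ν)⁻¹ *ᵥ (Xᵀ *ᵥ u)) ≤ (u ⬝ᵥ u) / (ν / n) := by
    filter_upwards [eventually_gt_atTop 0] with ν hν
    have hc : 0 < ν / n := div_pos hν hn'
    have hpos : (A ν).PosDef := hA ν ▸ posDef_smul_transpose_mul_self_add hc X D hker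
    have hAX : (A ν - (ν / n) • (Xᵀ * X)).PosSemidef := by
      simpa [hA ν] using posSemidef_conjTranspose_mul_self D
    exact ⟨by simpa using hpos.inv.posSemidef.dotProduct_mulVec_nonneg (Xᵀ *ᵥ u),
      dotProduct_inv_mulVec_le hpos X hc hAX u⟩
  exact tendsto_of_tendsto_of_tendsto_of_le_of_le' tendsto_const_nhds
    (tendsto_const_nhds.div_atTop (tendsto_id.atTop_div_const hn'))
    (hbounds.mono fun _ h => h.1) (hbounds.mono fun _ h => h.2)
end

section
/- Let X ∈ ℝ^{n×p} and D ∈ ℝ^{m×p} be real matrices with ker(X) ∩ ker(D) = {0}, and for ν > 0 set A(ν) = (ν/n)·XᵀX + DᵀD. If d ∈ ℝ^p does NOT lie in the column space of Xᵀ, then there exists a constant c > 0 such that dᵀ A(ν)⁻¹ d ≥ c for every ν > 0; in particular dᵀ A(ν)⁻¹ d does not tend to 0 as ν → +∞. -/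
open Matrix Filter

/-!
Since `range Xᵀ = (ker X)ᗮ`, there is `v ∈ ker X` with `⟪d, v⟫ ≠ 0`. Writing `d = A(ν) u`,
Cauchy–Schwarz for the positive definite form `A(ν)` gives
`⟪d, v⟫² = (uᵀ A(ν) v)² ≤ (uᵀ A(ν) u) (vᵀ A(ν) v) = (dᵀ A(ν)⁻¹ d) ‖D v‖²`,
because `vᵀ A(ν) v = ‖D v‖²` does not depend on `ν`. As `ker X ⊓ ker D = ⊥`, `D v ≠ 0`, so
`c = ⟪d, v⟫² / ‖D v‖²` works.
-/

theorem Matrix.exists_mulVec_eq_zero_dotProduct_ne_zero_of_notMem_range_transpose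
    {K m n : Type*} [Field K] [Fintype m] [Fintype n] [DecidableEq n]
    (M : Matrix m n K) {d : n → K} (hd : d ∉ LinearMap.range Mᵀ.mulVecLin) :
    ∃ v, M *ᵥ v = 0 ∧ d ⬝ᵥ v ≠ 0 := by
  classical
  obtain ⟨f, hfd, hrange⟩ := Submodule.exists_le_ker_of_notMem hd
  set v := (dotProductEquiv K n).symm f
  have hf : ∀ x, f x = v ⬝ᵥ x := fun x => by
    rw [← dotProductEquiv_apply_apply, LinearEquiv.apply_symm_apply]
  refine ⟨v, funext fun i => ?_, by rwa [dotProduct_comm, ← hf]⟩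
  have hrow := hrange ⟨Pi.single i 1, rfl⟩
  rw [LinearMap.mem_ker, hf, mulVecLin_apply, mulVec_single_one, dotProduct_comm] at hrow
  exact hrow

theorem Matrix.PosDef.sq_dotProduct_le_inv_mul {ι : Type*} [Fintype ι] [DecidableEq ι]
    {A : Matrix ι ι ℝ} (hA : A.PosDef) (d v : ι → ℝ) :
    (d ⬝ᵥ v) ^ 2 ≤ (d ⬝ᵥ A⁻¹ *ᵥ d) * (v ⬝ᵥ A *ᵥ v) := by
  set u := A⁻¹ *ᵥ d
  have hAu : A *ᵥ u = d := by
    rw [mulVec_mulVec, mul_nonsing_inv _ ((isUnit_iff_isUnit_det A).1 hA.isUnit), one_mulVec]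
  have hsymm : ∀ x y, x ⬝ᵥ A *ᵥ y = y ⬝ᵥ A *ᵥ x := fun x y => by
    rw [dotProduct_mulVec, ← mulVec_transpose, ← conjTranspose_eq_transpose_of_trivial,
      hA.isHermitian.eq, dotProduct_comm]
  have hCS := (toBilin' A).apply_mul_apply_le_of_forall_zero_le
    (fun x => by simpa [toBilin'_apply'] using hA.posSemidef.dotProduct_mulVec_nonneg x) u v
  rwa [toBilin'_apply', toBilin'_apply', toBilin'_apply', toBilin'_apply', hsymm u v, hAu,
    dotProduct_comm u d, dotProduct_comm v d, ← sq] at hCS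

section TransposeMulSelf

variable {ι m k : Type*} [Fintype ι] [Fintype m] [Fintype k]

theorem Matrix.dotProduct_smul_transpose_mul_self_add_mulVec (c : ℝ) (X : Matrix m ι ℝ)
    (D : Matrix k ι ℝ) (x : ι → ℝ) :
    x ⬝ᵥ (c • (Xᵀ * X) + Dᵀ * D) *ᵥ x = c * ((X *ᵥ x) ⬝ᵥ (X *ᵥ x)) + (D *ᵥ x) ⬝ᵥ (D *ᵥ x) := by
  rw [add_mulVec, smul_mulVec, dotProduct_add, dotProduct_smul, smul_eq_mul, ← mulVec_mulVec,
    ← mulVec_mulVec, dotProduct_mulVec, vecMul_transpose, dotProduct_mulVec x, vecMul_transpose]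

theorem Matrix.posDef_smul_transpose_mul_self_add_s3 {c : ℝ} (hc : 0 < c) (X : Matrix m ι ℝ)
    (D : Matrix k ι ℝ) (hker : LinearMap.ker X.mulVecLin ⊓ LinearMap.ker D.mulVecLin = ⊥) :
    (c • (Xᵀ * X) + Dᵀ * D).PosDef := by
  have hpsd : (c • (Xᵀ * X) + Dᵀ * D).PosSemidef := by
    simpa using ((posSemidef_conjTranspose_mul_self X).smul hc.le).add
      (posSemidef_conjTranspose_mul_self D)
  refine .of_dotProduct_mulVec_pos hpsd.isHermitian fun x hx => ?_
  rw [star_trivial, dotProduct_smul_transpose_mul_self_add_mulVec]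
  have hX_nonneg : 0 ≤ (X *ᵥ x) ⬝ᵥ (X *ᵥ x) := by
    simpa using dotProduct_star_self_nonneg (X *ᵥ x)
  have hD_nonneg : 0 ≤ (D *ᵥ x) ⬝ᵥ (D *ᵥ x) := by
    simpa using dotProduct_star_self_nonneg (D *ᵥ x)
  by_contra! hle
  have hXx : X *ᵥ x = 0 := dotProduct_self_eq_zero.1 (by nlinarith)
  have hDx : D *ᵥ x = 0 := dotProduct_self_eq_zero.1 (by nlinarith)
  exact hx <| (Submodule.eq_bot_iff _).1 hker x ⟨hXx, hDx⟩

end TransposeMulSelf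

/-- For `n = 0` the junk value `ν / 0 = 0` is harmless, since then `Xᵀ * X = 0`. -/
theorem Matrix.exists_pos_smul_eq_div_smul_transpose_mul_self {n : ℕ} {ι : Type*}
    (X : Matrix (Fin n) ι ℝ) {ν : ℝ} (hν : 0 < ν) : ∃ c : ℝ, 0 < c ∧ (ν / n) • (Xᵀ * X) = c • (Xᵀ * X) := by
  rcases n.eq_zero_or_pos with rfl | hn
  · exact ⟨1, one_pos, by simp [empty_mul_empty]⟩
  · exact ⟨ν / n, by positivity, rfl⟩

/-- **Converse direction of Theorem 1.** If `d ∉ Im(Xᵀ)`, then the quadratic form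
`dᵀ A(ν)⁻¹ d` with `A(ν) = (ν/n)·XᵀX + DᵀD` is bounded below by a positive constant
uniformly in `ν > 0`; in particular it does not tend to `0` as `ν → +∞`. -/
theorem quadform_bounded_below_of_not_mem_rowspace {n p m : ℕ}
    (X : Matrix (Fin n) (Fin p) ℝ) (D : Matrix (Fin m) (Fin p) ℝ)
    (hker : LinearMap.ker X.mulVecLin ⊓ LinearMap.ker D.mulVecLin = ⊥)
    (A : ℝ → Matrix (Fin p) (Fin p) ℝ)
    (hA : ∀ ν : ℝ, A ν = (ν / n) • (Xᵀ * X) + Dᵀ * D)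
    (d : Fin p → ℝ) (hd : d ∉ LinearMap.range (Xᵀ).mulVecLin) :
    (∃ c : ℝ, 0 < c ∧ ∀ ν : ℝ, 0 < ν → c ≤ d ⬝ᵥ ((A ν)⁻¹ *ᵥ d)) ∧
      ¬ Tendsto (fun ν : ℝ => d ⬝ᵥ ((A ν)⁻¹ *ᵥ d)) atTop (nhds 0) := by
  obtain ⟨v, hXv, hdv⟩ := X.exists_mulVec_eq_zero_dotProduct_ne_zero_of_notMem_range_transpose hd
  have hDv : D *ᵥ v ≠ 0 := fun hDv =>
    hdv <| by rw [(Submodule.eq_bot_iff _).1 hker v ⟨hXv, hDv⟩, dotProduct_zero]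
  have hDv_pos : 0 < (D *ᵥ v) ⬝ᵥ (D *ᵥ v) := by simpa using dotProduct_star_self_pos_iff.2 hDv
  set c := (d ⬝ᵥ v) ^ 2 / ((D *ᵥ v) ⬝ᵥ (D *ᵥ v))
  have hc : 0 < c := by positivity
  have hbound : ∀ ν : ℝ, 0 < ν → c ≤ d ⬝ᵥ ((A ν)⁻¹ *ᵥ d) := by
    intro ν hν
    obtain ⟨c', hc', hA'⟩ := X.exists_pos_smul_eq_div_smul_transpose_mul_self hν
    have hCS := (posDef_smul_transpose_mul_self_add_s3 hc' X D hker).sq_dotProduct_le_inv_mul d v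
    rw [dotProduct_smul_transpose_mul_self_add_mulVec, hXv, dotProduct_zero, mul_zero,
      zero_add] at hCS
    rwa [div_le_iff₀ hDv_pos, hA, hA']
  exact ⟨⟨c, hc, hbound⟩, fun hT => hc.not_ge <|
    ge_of_tendsto hT ((eventually_gt_atTop 0).mono hbound)⟩
end
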